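/- arXiv:2001.05953 — 2 statements merged into one kernel-verified Lean document; each statement's English description precedes it below -/
import Mathlib

section
/- Let F, G, H, I be finite groups, and let U be a subgroup of F × G, V a subgroup of G × H, and W a subgroup of H × I. Then |Γ∩(U,V)| · |Γ∩(U*V, W)| = |Γ∩(U, V*W)| · |Γ∩(V,W)|. -/
open scoped Pointwise

section StarPrelude

variable {F G H I : Type*} [Group F] [Group G] [Group H] [Group I]
variable {A : Type*} [CommGroup A]

/-- The star product of subgroups `U ≤ F × G` and `V ≤ G × H`. -/
def starProd (U : Subgroup (F × G)) (V : Subgroup (G × H)) : Subgroup (F × H) where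
  carrier := {p | ∃ g : G, (p.1, g) ∈ U ∧ (g, p.2) ∈ V}
  one_mem' := ⟨1, U.one_mem, V.one_mem⟩
  mul_mem' := by
    rintro ⟨a, b⟩ ⟨c, d⟩ ⟨g, h1, h2⟩ ⟨g', h1', h2'⟩
    exact ⟨g * g', U.mul_mem h1 h1', V.mul_mem h2 h2'⟩
  inv_mem' := by
    rintro ⟨a, b⟩ ⟨g, h1, h2⟩
    exact ⟨g⁻¹, U.inv_mem h1, V.inv_mem h2⟩

infixl:70 " ⋆ " => starProd

theorem mem_starProd {U : Subgroup (F × G)} {V : Subgroup (G × H)} {p : F × H} :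
    p ∈ U ⋆ V ↔ ∃ g : G, (p.1, g) ∈ U ∧ (g, p.2) ∈ V := Iff.rfl

/-- `Γ(U,V) = {(f,g,h) : (f,g) ∈ U, (g,h) ∈ V}`. -/
def gammaSet (U : Subgroup (F × G)) (V : Subgroup (G × H)) : Set (F × G × H) :=
  {p | (p.1, p.2.1) ∈ U ∧ (p.2.1, p.2.2) ∈ V}

/-- `Γ∩(U,V) = {g ∈ G : (1,g) ∈ U and (g,1) ∈ V}`. -/
def gammaCap (U : Subgroup (F × G)) (V : Subgroup (G × H)) : Set G :=
  {g | ((1 : F), g) ∈ U ∧ (g, (1 : H)) ∈ V}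

/-- `p₁(U)`, the image of `U ≤ F × G` in `F`. -/
def proj1 (U : Subgroup (F × G)) : Subgroup F := U.map (MonoidHom.fst F G)

/-- `p₂(U)`, the image of `U ≤ F × G` in `G`. -/
def proj2 (U : Subgroup (F × G)) : Subgroup G := U.map (MonoidHom.snd F G)

/-- `k₁(U) = {f : (f,1) ∈ U}`. -/
def ker1 (U : Subgroup (F × G)) : Set F := {f | (f, (1 : G)) ∈ U}

/-- `k₂(U) = {g : (1,g) ∈ U}`. -/
def ker2 (U : Subgroup (F × G)) : Set G := {g | ((1 : F), g) ∈ U}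

end StarPrelude

/-! Both sides compute the order of `M = {(g, h) : (1, g) ∈ U, (g, h) ∈ V, (h, 1) ∈ W} ≤ G × H`
through the two factorisations `|M| = |p₁(M)| · |k₂(M)| = |p₂(M)| · |k₁(M)|`: the projections
of `M` are `Γ∩(U, V * W)` and `Γ∩(U * V, W)`, and its kernels are `Γ∩(V, W)` and `Γ∩(U, V)`. -/

section CardFormula

variable {F G : Type*} [Group F] [Group G]

theorem card_eq_card_proj2_mul_card_ker1 (U : Subgroup (F × G)) :
    Nat.card U = Nat.card (proj2 U : Set G) * Nat.card (ker1 U) := by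
  set φ := (MonoidHom.snd F G).comp U.subtype
  have hrange : (φ.range : Set G) = proj2 U := by
    rw [MonoidHom.range_comp, Subgroup.range_subtype]; rfl
  have hker : ker1 U ≃ φ.ker := by
    refine .ofBijective (fun f => ⟨⟨(f, 1), f.2⟩, rfl⟩) ⟨fun f f' h => ?_, ?_⟩
    · exact Subtype.ext (congrArg (fun u : φ.ker => u.1.1.1) h)
    · rintro ⟨⟨⟨f, g⟩, hU⟩, hg : g = 1⟩
      subst hg
      exact ⟨⟨f, hU⟩, rfl⟩
  rw [← φ.ker.card_mul_index, Subgroup.index_ker, ← hrange, ← Nat.card_congr hker, mul_comm]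
  rfl

theorem card_eq_card_proj1_mul_card_ker2 (U : Subgroup (F × G)) :
    Nat.card U = Nat.card (proj1 U : Set F) * Nat.card (ker2 U) := by
  set φ := (MonoidHom.fst F G).comp U.subtype
  have hrange : (φ.range : Set F) = proj1 U := by
    rw [MonoidHom.range_comp, Subgroup.range_subtype]; rfl
  have hker : ker2 U ≃ φ.ker := by
    refine .ofBijective (fun g => ⟨⟨(1, g), g.2⟩, rfl⟩) ⟨fun g g' h => ?_, ?_⟩
    · exact Subtype.ext (congrArg (fun u : φ.ker => u.1.1.2) h)
    · rintro ⟨⟨⟨f, g⟩, hU⟩, hf : f = 1⟩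
      subst hf
      exact ⟨⟨g, hU⟩, rfl⟩
  rw [← φ.ker.card_mul_index, Subgroup.index_ker, ← hrange, ← Nat.card_congr hker, mul_comm]
  rfl

end CardFormula

section GammaCapThree

variable {F G H I : Type*} [Group F] [Group G] [Group H] [Group I]

def gammaCap₃ (U : Subgroup (F × G)) (V : Subgroup (G × H)) (W : Subgroup (H × I)) :
    Subgroup (G × H) where
  carrier := {p | ((1 : F), p.1) ∈ U ∧ p ∈ V ∧ (p.2, (1 : I)) ∈ W}
  one_mem' := ⟨U.one_mem, V.one_mem, W.one_mem⟩
  mul_mem' := by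
    rintro ⟨g, h⟩ ⟨g', h'⟩ ⟨hU, hV, hW⟩ ⟨hU', hV', hW'⟩
    exact ⟨by simpa using U.mul_mem hU hU', V.mul_mem hV hV', by simpa using W.mul_mem hW hW'⟩
  inv_mem' := by
    rintro ⟨g, h⟩ ⟨hU, hV, hW⟩
    exact ⟨by simpa using U.inv_mem hU, V.inv_mem hV, by simpa using W.inv_mem hW⟩

variable (U : Subgroup (F × G)) (V : Subgroup (G × H)) (W : Subgroup (H × I))

theorem mem_gammaCap₃ {p : G × H} :
    p ∈ gammaCap₃ U V W ↔ ((1 : F), p.1) ∈ U ∧ p ∈ V ∧ (p.2, (1 : I)) ∈ W := Iff.rfl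

theorem proj1_gammaCap₃ : (proj1 (gammaCap₃ U V W) : Set G) = gammaCap U (V ⋆ W) := by
  ext g
  simp [proj1, gammaCap, mem_gammaCap₃, mem_starProd, and_assoc]

theorem proj2_gammaCap₃ : (proj2 (gammaCap₃ U V W) : Set H) = gammaCap (U ⋆ V) W := by
  ext h
  simp [proj2, gammaCap, mem_gammaCap₃, mem_starProd, ← and_assoc]

theorem ker1_gammaCap₃ : ker1 (gammaCap₃ U V W) = gammaCap U V := by
  ext g
  exact ⟨fun ⟨hU, hV, _⟩ => ⟨hU, hV⟩, fun ⟨hU, hV⟩ => ⟨hU, hV, W.one_mem⟩⟩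

theorem ker2_gammaCap₃ : ker2 (gammaCap₃ U V W) = gammaCap V W := by
  ext h
  exact ⟨fun ⟨_, hV, hW⟩ => ⟨hV, hW⟩, fun ⟨hV, hW⟩ => ⟨U.one_mem, hV, hW⟩⟩

end GammaCapThree

theorem stmt0_general {F G H I : Type*} [Group F] [Group G] [Group H] [Group I]
    (U : Subgroup (F × G)) (V : Subgroup (G × H)) (W : Subgroup (H × I)) :
    Nat.card (gammaCap U V) * Nat.card (gammaCap (U ⋆ V) W) =
      Nat.card (gammaCap U (V ⋆ W)) * Nat.card (gammaCap V W) := by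
  have hleft := card_eq_card_proj2_mul_card_ker1 (gammaCap₃ U V W)
  have hright := card_eq_card_proj1_mul_card_ker2 (gammaCap₃ U V W)
  rw [proj2_gammaCap₃, ker1_gammaCap₃] at hleft
  rw [proj1_gammaCap₃, ker2_gammaCap₃] at hright
  rw [mul_comm, ← hleft, hright]

/-- Boltje–Danz. For finite groups `F, G, H, I` and subgroups
`U ≤ F × G`, `V ≤ G × H`, `W ≤ H × I`:
`|Γ∩(U,V)| · |Γ∩(U*V, W)| = |Γ∩(U, V*W)| · |Γ∩(V,W)|`. -/
theorem stmt0 {F G H I : Type*} [Group F] [Group G] [Group H] [Group I]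
    [Finite F] [Finite G] [Finite H] [Finite I]
    (U : Subgroup (F × G)) (V : Subgroup (G × H)) (W : Subgroup (H × I)) :
    Nat.card (gammaCap U V) * Nat.card (gammaCap (U ⋆ V) W) =
      Nat.card (gammaCap U (V ⋆ W)) * Nat.card (gammaCap V W) :=
  stmt0_general U V W
end

section
/- Let F, G, H be finite groups, U a subgroup of F × G, and V a subgroup of G × H. Then |U| · |V| = |Γ(U,V)| · |p₂(U)·p₁(V)|, where p₂(U)·p₁(V) denotes the product subset {g·g' : g ∈ p₂(U), g' ∈ p₁(V)} of G. -/
open scoped Pointwise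

section StarPrelude

variable {F G H I : Type*} [Group F] [Group G] [Group H] [Group I]
variable {A : Type*} [CommGroup A]

infixl:70 " ⋆ " => starProd

end StarPrelude

/-!
The map `(u, v) ↦ p₂(u) · p₁(v)⁻¹` sends `U × V` onto `p₂(U)·p₁(V)` (as `p₁(V)` is a group), and
its fibres are the left cosets of the subgroup of pairs with `p₂(u) = p₁(v)`, which is a copy
of `Γ(U,V)`; Lagrange's theorem then counts `U × V`.
-/

namespace MonoidHom

variable {X Y : Type*} [Group X] [Group Y]

theorem mul_inv_eq_mul_inv_iff_inv_mul_mem_eqLocus (f g : X →* Y) {x y : X} :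
    f x * (g x)⁻¹ = f y * (g y)⁻¹ ↔ x⁻¹ * y ∈ f.eqLocus g := by
  change _ ↔ f (x⁻¹ * y) = g (x⁻¹ * y)
  rw [map_mul, map_mul, map_inv, map_inv, mul_inv_eq_iff_eq_mul, mul_assoc,
    ← inv_mul_eq_iff_eq_mul, ← inv_inj, mul_inv_rev, mul_inv_rev, inv_inv, inv_inv]

/-- The fibres of `x ↦ f x * (g x)⁻¹` are the left cosets of `f.eqLocus g`. -/
theorem card_eq_card_eqLocus_mul_card_range_mul_inv (f g : X →* Y) :
    Nat.card X = Nat.card (f.eqLocus g) * Nat.card (Set.range fun x => f x * (g x)⁻¹) := by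
  let φ : X ⧸ f.eqLocus g → Y := Quotient.lift (fun x => f x * (g x)⁻¹) fun x y hxy =>
    (f.mul_inv_eq_mul_inv_iff_inv_mul_mem_eqLocus g).2 (QuotientGroup.leftRel_apply.1 hxy)
  have hφ : Function.Injective φ := by
    rintro ⟨x⟩ ⟨y⟩ hxy
    exact QuotientGroup.eq.2 ((f.mul_inv_eq_mul_inv_iff_inv_mul_mem_eqLocus g).1 hxy)
  rw [(f.eqLocus g).card_eq_card_quotient_mul_card_subgroup, mul_comm,
    Nat.card_congr (Equiv.ofInjective φ hφ)]
  congr 3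
  exact Set.range_quot_lift _

end MonoidHom

section StarProduct

variable {F G H : Type*} [Group F] [Group G] [Group H]

/-- The pairs `(u, v) ∈ U × V` with `p₂ u = p₁ v`. -/
def matchingPairs (U : Subgroup (F × G)) (V : Subgroup (G × H)) : Subgroup (U × V) :=
  ((MonoidHom.snd F G).comp (U.subtype.comp (MonoidHom.fst U V))).eqLocus
    ((MonoidHom.fst G H).comp (V.subtype.comp (MonoidHom.snd U V)))

def gammaSetEquivMatchingPairs (U : Subgroup (F × G)) (V : Subgroup (G × H)) :
    gammaSet U V ≃ matchingPairs U V where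
  toFun p := ⟨(⟨(p.1.1, p.1.2.1), p.2.1⟩, ⟨p.1.2, p.2.2⟩), rfl⟩
  invFun x := ⟨((x.1.1 : F × G).1, (x.1.2 : G × H)), by
    obtain ⟨⟨⟨⟨f, g⟩, hu⟩, ⟨⟨g', h⟩, hv⟩⟩, hx⟩ := x
    obtain rfl : g = g' := hx
    exact ⟨hu, hv⟩⟩
  left_inv _ := rfl
  right_inv := by
    rintro ⟨⟨⟨⟨f, g⟩, hu⟩, ⟨⟨g', h⟩, hv⟩⟩, hx⟩
    obtain rfl : g = g' := hx
    rfl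

theorem range_snd_mul_inv_fst (U : Subgroup (F × G)) (V : Subgroup (G × H)) :
    (Set.range fun x : U × V => (x.1 : F × G).2 * ((x.2 : G × H).1)⁻¹) =
      (proj2 U : Set G) * (proj1 V : Set G) := by
  ext g
  constructor
  · rintro ⟨⟨u, v⟩, rfl⟩
    exact ⟨_, ⟨u, u.2, rfl⟩, _, inv_mem ⟨v, v.2, rfl⟩, rfl⟩
  · rintro ⟨_, ⟨u, hu, rfl⟩, _, ⟨v, hv, rfl⟩, rfl⟩
    exact ⟨(⟨u, hu⟩, ⟨v⁻¹, V.inv_mem hv⟩), by simp⟩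

end StarProduct

theorem stmt4_general {F G H : Type*} [Group F] [Group G] [Group H]
    (U : Subgroup (F × G)) (V : Subgroup (G × H)) :
    Nat.card U * Nat.card V =
      Nat.card (gammaSet U V) * Nat.card ((proj2 U : Set G) * (proj1 V : Set G)) := by
  rw [← Nat.card_prod, ← range_snd_mul_inv_fst,
    Nat.card_congr (gammaSetEquivMatchingPairs U V)]
  exact MonoidHom.card_eq_card_eqLocus_mul_card_range_mul_inv _ _

/-- For finite groups `F, G, H` and subgroups `U ≤ F × G`, `V ≤ G × H`:
`|U| · |V| = |Γ(U,V)| · |p₂(U)·p₁(V)|`. -/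
theorem stmt4 {F G H : Type*} [Group F] [Group G] [Group H]
    [Finite F] [Finite G] [Finite H]
    (U : Subgroup (F × G)) (V : Subgroup (G × H)) :
    Nat.card U * Nat.card V =
      Nat.card (gammaSet U V) * Nat.card ((proj2 U : Set G) * (proj1 V : Set G)) :=
  stmt4_general U V
end
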